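/- arXiv:math/0501264 — 6 statements merged into one kernel-verified Lean document; each statement's English description precedes it below -/
import Mathlib

section
/- Let α be a strongly continuous one-parameter group of isometric automorphisms of a C*-algebra A, with generator δ. If b is a self-adjoint element of the domain of δ, then for all t ∈ ℝ, ‖α_t(e^{ib}) − e^{ib}‖ ≤ |t|·‖δ(b)‖. -/
/-!
Since `α_t` is a continuous `⋆`-automorphism, `α_t (e^{ib}) = e^{i α_t(b)}`, and `x ↦ e^{ix}` is
`1`-Lipschitz on self-adjoint elements, so the estimate reduces to
`‖α_t b - b‖ = ‖∫₀ᵗ α_s (δ b) ds‖ ≤ |t| ‖δ b‖`.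
-/

open NormedSpace Complex

theorem hasDerivAt_exp_smul_mul_exp_one_sub_smul {𝕂 𝔸 : Type*} [RCLike 𝕂] [NormedRing 𝔸]
    [NormedAlgebra 𝕂 𝔸] [CompleteSpace 𝔸] (z w : 𝔸) (s : 𝕂) :
    HasDerivAt (fun u : 𝕂 => exp (u • z) * exp ((1 - u) • w))
      (exp (s • z) * ((z - w) * exp ((1 - s) • w))) s := by
  have hw : HasDerivAt (fun u : 𝕂 => exp ((1 - u) • w)) (-(w * exp ((1 - s) • w))) s := by
    simpa [Function.comp_def] using
      (hasDerivAt_exp_smul_const' w (1 - s)).scomp s ((hasDerivAt_id s).const_sub 1)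
  refine ((hasDerivAt_exp_smul_const z s).mul hw).congr_deriv ?_
  rw [mul_neg, ← sub_eq_add_neg, mul_assoc, ← mul_sub, sub_mul]

section CStarRing

variable {A : Type*} [NormedRing A] [StarRing A] [CStarRing A] [CompleteSpace A]
  [NormedAlgebra ℂ A] [StarModule ℂ A]

theorem IsSelfAdjoint.exp_real_smul_I_smul_mem_unitary {x : A} (hx : IsSelfAdjoint x) (s : ℝ) :
    NormedSpace.exp (s • I • x) ∈ unitary A := by
  rw [smul_comm]
  exact (selfAdjoint.expUnitary ⟨s • x, IsSelfAdjoint.smul (star_trivial s) hx⟩).2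

theorem IsSelfAdjoint.norm_exp_I_smul_sub_exp_I_smul_le {x y : A} (hx : IsSelfAdjoint x)
    (hy : IsSelfAdjoint y) : ‖NormedSpace.exp (I • x) - NormedSpace.exp (I • y)‖ ≤ ‖x - y‖ := by
  -- Along `s ↦ e^{isx} e^{i(1-s)y}` the derivative is `(ix - iy)` between two unitaries.
  have hderiv_norm (s : ℝ) :
      ‖NormedSpace.exp (s • I • x) * ((I • x - I • y) * NormedSpace.exp ((1 - s) • I • y))‖ =
        ‖x - y‖ := by
    rw [CStarRing.norm_mem_unitary_mul _ (hx.exp_real_smul_I_smul_mem_unitary s),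
      CStarRing.norm_mul_mem_unitary _ (hy.exp_real_smul_I_smul_mem_unitary (1 - s)),
      ← smul_sub, norm_smul, norm_I, one_mul]
  have := Convex.norm_image_sub_le_of_norm_hasDerivWithin_le
    (fun s _ => (hasDerivAt_exp_smul_mul_exp_one_sub_smul (I • x) (I • y) s).hasDerivWithinAt)
    (fun s _ => (hderiv_norm s).le) convex_univ (Set.mem_univ 0) (Set.mem_univ 1)
  simpa using this

end CStarRing

theorem quasifree_exp_estimate_general
    {A : Type*} [NormedRing A] [StarRing A] [CStarRing A]
    [CompleteSpace A] [NormedAlgebra ℂ A] [StarModule ℂ A]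
    (α : ℝ → A ≃⋆ₐ[ℂ] A)
    (hiso : ∀ (t : ℝ) (x : A), ‖α t x‖ = ‖x‖)
    (Dδ : Set A) (δ : A → A)
    (hgen : ∀ x ∈ Dδ, ∀ t : ℝ, α t x - x = ∫ s in (0:ℝ)..t, α s (δ x))
    (b : A) (hb : b ∈ Dδ) (hbsa : IsSelfAdjoint b) :
    ∀ t : ℝ, ‖α t (NormedSpace.exp (Complex.I • b)) - NormedSpace.exp (Complex.I • b)‖
      ≤ |t| * ‖δ b‖ := by
  intro t
  have hα_exp : α t (exp (I • b)) = exp (I • α t b) := by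
    let +nondep : NormedAlgebra ℚ A := .restrictScalars ℚ ℂ A
    rw [map_exp (α t) (AddMonoidHomClass.isometry_of_norm (α t) (hiso t)).continuous, map_smul]
  calc ‖α t (exp (I • b)) - exp (I • b)‖ = ‖exp (I • α t b) - exp (I • b)‖ := by rw [hα_exp]
    _ ≤ ‖α t b - b‖ := IsSelfAdjoint.norm_exp_I_smul_sub_exp_I_smul_le (hbsa.map (α t)) hbsa
    _ = ‖∫ s in (0:ℝ)..t, α s (δ b)‖ := by rw [hgen b hb t]
    _ ≤ ‖δ b‖ * |t - 0| :=
      intervalIntegral.norm_integral_le_of_norm_le_const fun s _ => (hiso s (δ b)).le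
    _ = |t| * ‖δ b‖ := by rw [sub_zero, mul_comm]

/-- If `α` is a strongly continuous one-parameter group of isometric
automorphisms of a C*-algebra `A` with generator `δ` (so that
`α_t x - x = ∫₀ᵗ α_s (δ x) ds` for `x` in the domain of `δ`), and `b` is a self-adjoint
element of the domain of `δ`, then `‖α_t (e^{ib}) - e^{ib}‖ ≤ |t| ⬝ ‖δ b‖` for all `t`. -/
theorem quasifree_exp_estimate
    {A : Type*} [NormedRing A] [StarRing A] [CStarRing A]
    [CompleteSpace A] [NormedAlgebra ℂ A] [StarModule ℂ A]
    (α : ℝ → A ≃⋆ₐ[ℂ] A)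
    (hgroup : ∀ s t : ℝ, ∀ x : A, α (s + t) x = α s (α t x))
    (hcont : ∀ x : A, Continuous fun t : ℝ => α t x)
    (hiso : ∀ (t : ℝ) (x : A), ‖α t x‖ = ‖x‖)
    (Dδ : Set A) (δ : A → A)
    (hgen : ∀ x ∈ Dδ, ∀ t : ℝ, α t x - x = ∫ s in (0:ℝ)..t, α s (δ x))
    (b : A) (hb : b ∈ Dδ) (hbsa : IsSelfAdjoint b) :
    ∀ t : ℝ, ‖α t (NormedSpace.exp (Complex.I • b)) - NormedSpace.exp (Complex.I • b)‖
      ≤ |t| * ‖δ b‖ :=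
  quasifree_exp_estimate_general α hiso Dδ δ hgen b hb hbsa
end

section
/- Let H be a Hilbert space, E a projection on H, and Y a partial isometry with Y*Y = E and YY* = 1 − E. Define X_t = cos(πt/2)·1 + sin(πt/2)·(Y − Y*) for t ∈ [0,1]. Then each X_t is a unitary operator, X₀ = 1, X₁ = Y − Y*, and ‖X_{t₁} − X_{t₂}‖ ≤ π·|t₁ − t₂| for all t₁, t₂ ∈ [0,1]. Moreover Ad X₁ exchanges E and 1 − E, i.e., X₁ E X₁* = 1 − E. -/
/-!
Because `E = Y*Y` is a projection, the C*-identity gives `YE = Y`; together with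
`YY* = 1 - E` this forces `Y² = 0`, so `S = Y - Y*` is skew-adjoint with `S² = -1`.
Then `cos θ + sin θ • S` multiplies like the unit complex number `e^{iθ}`, hence is unitary,
and the path is Lipschitz because `cos`, `sin` are `1`-Lipschitz and `‖S‖ ≤ 1`.
Finally `SE = Y`, so `SES* = YY* = 1 - E`.
-/

open Real

theorem mul_star_mul_self_of_isIdempotentElem {A : Type*} [NonUnitalNormedRing A] [StarRing A]
    [CStarRing A] {a : A} (h : IsIdempotentElem (star a * a)) : a * (star a * a) = a := by
  rw [← sub_eq_zero, ← CStarRing.star_mul_self_eq_zero_iff]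
  have hcube : star a * a * (star a * a) * (star a * a) = star a * a := by rw [h.eq, h.eq]
  calc star (a * (star a * a) - a) * (a * (star a * a) - a)
      = star a * a * (star a * a) * (star a * a) - 2 • (star a * a * (star a * a))
        + star a * a := by
        simp only [star_sub, star_mul, star_star, sub_mul, mul_sub]; noncomm_ring
    _ = 0 := by rw [hcube, h.eq]; abel

section StarRing

variable {A : Type*} [Ring A] [StarRing A] {a : A}

theorem mul_self_eq_zero_of_mul_star_mul_self_eq (h : a * (star a * a) = a)
    (hsum : star a * a + a * star a = 1) : a * a = 0 := by
  have hleft : star a * a * a = 0 := by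
    calc star a * a * a = (1 - a * star a) * a := by rw [← hsum, add_sub_cancel_right]
      _ = 0 := by rw [sub_mul, one_mul, mul_assoc, h, sub_self]
  calc a * a = a * (star a * a * a) := by rw [← mul_assoc, ← mul_assoc, mul_assoc a, h]
    _ = 0 := by rw [hleft, mul_zero]

theorem sub_star_mul_self_eq_neg_one (hsq : a * a = 0) (hsum : star a * a + a * star a = 1) :
    (a - star a) * (a - star a) = -1 := by
  have hsq' : star a * star a = 0 := by rw [← star_mul, hsq, star_zero]
  calc (a - star a) * (a - star a)
        = a * a + star a * star a - (star a * a + a * star a) := by noncomm_ring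
    _ = -1 := by rw [hsq, hsq', hsum]; abel

theorem sub_star_mul_star_mul_self_mul_star (hsq : a * a = 0) (h : a * (star a * a) = a) :
    (a - star a) * (star a * a) * star (a - star a) = a * star a := by
  have hsq' : star a * star a = 0 := by rw [← star_mul, hsq, star_zero]
  have hproj : (a - star a) * (star a * a) = a := by
    rw [sub_mul, h, ← mul_assoc, hsq', zero_mul, sub_zero]
  rw [hproj, star_sub, star_star, mul_sub, hsq, sub_zero]

end StarRing

theorem cos_smul_one_add_sin_smul_mem_unitary {A : Type*} [Ring A] [StarRing A] [Algebra ℝ A]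
    [StarModule ℝ A] {S : A} (hS : star S = -S) (hSS : S * S = -1) (θ : ℝ) :
    cos θ • (1 : A) + sin θ • S ∈ unitary A := by
  have hstar : star (cos θ • (1 : A) + sin θ • S) = cos θ • 1 - sin θ • S := by
    rw [star_add, star_smul, star_smul, star_one, hS, star_trivial, star_trivial, smul_neg,
      sub_eq_add_neg]
  rw [Unitary.mem_iff, hstar]
  constructor
  · simp only [sub_mul, mul_add, smul_mul_smul, one_mul, mul_one, hSS]
    linear_combination (norm := module) (cos_sq_add_sin_sq θ) • (1 : A)
  · simp only [add_mul, mul_sub, smul_mul_smul, one_mul, mul_one, hSS]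
    linear_combination (norm := module) (cos_sq_add_sin_sq θ) • (1 : A)

theorem norm_le_one_of_mem_unitary {A : Type*} [NormedRing A] [StarRing A] [CStarRing A] {U : A}
    (hU : U ∈ unitary A) : ‖U‖ ≤ 1 := by
  rcases subsingleton_or_nontrivial A with hA | hA
  · simp [Subsingleton.elim U 0]
  · exact (CStarRing.norm_of_mem_unitary hU).le

theorem norm_cos_smul_one_add_sin_smul_sub_le {A : Type*} [NormedRing A] [StarRing A]
    [CStarRing A] [NormedAlgebra ℝ A] {S : A} (hS : S ∈ unitary A) (a b : ℝ) :
    ‖(cos a • (1 : A) + sin a • S) - (cos b • (1 : A) + sin b • S)‖ ≤ 2 * |a - b| := by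
  calc ‖(cos a • (1 : A) + sin a • S) - (cos b • (1 : A) + sin b • S)‖
      = ‖(cos a - cos b) • (1 : A) + (sin a - sin b) • S‖ := by congr 1; module
    _ ≤ |cos a - cos b| * ‖(1 : A)‖ + |sin a - sin b| * ‖S‖ := by
        grw [norm_add_le, norm_smul, norm_smul, Real.norm_eq_abs, Real.norm_eq_abs]
    _ ≤ |a - b| * 1 + |a - b| * 1 := by
        gcongr ?_ * ?_ + ?_ * ?_
        · exact abs_cos_sub_cos_le a b
        · exact norm_le_one_of_mem_unitary (one_mem _)
        · exact abs_sin_sub_sin_le a b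
        · exact norm_le_one_of_mem_unitary hS
    _ = 2 * |a - b| := by ring

theorem rotation_path_exchanging_projections_general
    {H : Type*} [NormedAddCommGroup H] [InnerProductSpace ℂ H] [CompleteSpace H]
    (E Y : H →L[ℂ] H) (hE2 : IsIdempotentElem E)
    (hY1 : star Y * Y = E) (hY2 : Y * star Y = 1 - E) :
    (∀ t : ℝ,
      Real.cos (Real.pi * t / 2) • (1 : H →L[ℂ] H)
        + Real.sin (Real.pi * t / 2) • (Y - star Y) ∈ unitary (H →L[ℂ] H)) ∧
    (Real.cos (Real.pi * 0 / 2) • (1 : H →L[ℂ] H)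
        + Real.sin (Real.pi * 0 / 2) • (Y - star Y) = 1) ∧
    (Real.cos (Real.pi * 1 / 2) • (1 : H →L[ℂ] H)
        + Real.sin (Real.pi * 1 / 2) • (Y - star Y) = Y - star Y) ∧
    (∀ t₁ ∈ Set.Icc (0:ℝ) 1, ∀ t₂ ∈ Set.Icc (0:ℝ) 1,
      ‖(Real.cos (Real.pi * t₁ / 2) • (1 : H →L[ℂ] H)
          + Real.sin (Real.pi * t₁ / 2) • (Y - star Y))
        - (Real.cos (Real.pi * t₂ / 2) • (1 : H →L[ℂ] H)
          + Real.sin (Real.pi * t₂ / 2) • (Y - star Y))‖ ≤ Real.pi * |t₁ - t₂|) ∧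
    (Y - star Y) * E * star (Y - star Y) = 1 - E := by
  subst hY1
  have hYE := mul_star_mul_self_of_isIdempotentElem hE2
  have hsum : star Y * Y + Y * star Y = 1 := by rw [hY2, add_sub_cancel]
  have hYY := mul_self_eq_zero_of_mul_star_mul_self_eq hYE hsum
  have hrot := cos_smul_one_add_sin_smul_mem_unitary (by rw [star_sub, star_star, neg_sub])
    (sub_star_mul_self_eq_neg_one hYY hsum)
  have hS : Y - star Y ∈ unitary (H →L[ℂ] H) := by simpa using hrot (π / 2)
  refine ⟨fun t => hrot _, by simp, by simp, fun t₁ _ t₂ _ => ?_, ?_⟩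
  · calc _ ≤ 2 * |π * t₁ / 2 - π * t₂ / 2| := norm_cos_smul_one_add_sin_smul_sub_le hS _ _
      _ = π * |t₁ - t₂| := by
        rw [← sub_div, ← mul_sub, abs_div, abs_mul, abs_of_pos pi_pos, abs_two]
        ring
  · rw [sub_star_mul_star_mul_self_mul_star hYY hYE, hY2]

/-- Let `E` be a projection on a Hilbert space `H` and `Y` a partial isometry
with `Y*Y = E`, `YY* = 1 − E`. With `X_t = cos(πt/2)⬝1 + sin(πt/2)⬝(Y − Y*)`, each `X_t`
is unitary, `X_0 = 1`, `X_1 = Y − Y*`, `‖X_{t₁} − X_{t₂}‖ ≤ π|t₁ − t₂|` on `[0,1]`, and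
`X_1 E X_1* = 1 − E`. -/
theorem rotation_path_exchanging_projections
    {H : Type*} [NormedAddCommGroup H] [InnerProductSpace ℂ H] [CompleteSpace H]
    (E Y : H →L[ℂ] H) (hE1 : IsSelfAdjoint E) (hE2 : IsIdempotentElem E)
    (hY1 : star Y * Y = E) (hY2 : Y * star Y = 1 - E) :
    (∀ t : ℝ,
      Real.cos (Real.pi * t / 2) • (1 : H →L[ℂ] H)
        + Real.sin (Real.pi * t / 2) • (Y - star Y) ∈ unitary (H →L[ℂ] H)) ∧
    (Real.cos (Real.pi * 0 / 2) • (1 : H →L[ℂ] H)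
        + Real.sin (Real.pi * 0 / 2) • (Y - star Y) = 1) ∧
    (Real.cos (Real.pi * 1 / 2) • (1 : H →L[ℂ] H)
        + Real.sin (Real.pi * 1 / 2) • (Y - star Y) = Y - star Y) ∧
    (∀ t₁ ∈ Set.Icc (0:ℝ) 1, ∀ t₂ ∈ Set.Icc (0:ℝ) 1,
      ‖(Real.cos (Real.pi * t₁ / 2) • (1 : H →L[ℂ] H)
          + Real.sin (Real.pi * t₁ / 2) • (Y - star Y))
        - (Real.cos (Real.pi * t₂ / 2) • (1 : H →L[ℂ] H)
          + Real.sin (Real.pi * t₂ / 2) • (Y - star Y))‖ ≤ Real.pi * |t₁ - t₂|) ∧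
    (Y - star Y) * E * star (Y - star Y) = 1 - E :=
  rotation_path_exchanging_projections_general E Y hE2 hY1 hY2
end

section
/- Let α be a flow on a unital C*-algebra A with generator δ, let C ⊆ D(δ) be a C*-subalgebra, and suppose there is a self-adjoint h ∈ A with δ(x) = i(hx − xh) for all x ∈ C. Then for all x ∈ C with ‖x‖ ≤ 1 and all t ∈ ℝ, ‖α_t(δ(x)) − δ(x)‖ ≤ 2(‖α_t(h) − h‖ + ‖h‖·‖δ|C‖·|t|), where ‖δ|C‖ denotes the norm of the restriction of δ to C. In particular, sup{‖α_t(δ(x)) − δ(x)‖ : x ∈ C, ‖x‖ ≤ 1} → 0 as t → 0. -/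
/-- Let `α` be a flow on a unital C*-algebra `A` with generator `δ`,
`C ⊆ D(δ)` a C*-subalgebra, and `h = h* ∈ A` with `δ(x) = i(hx − xh)` for `x ∈ C`.
Then for `x ∈ C` with `‖x‖ ≤ 1` and `t ∈ ℝ`,
`‖α_t(δ(x)) − δ(x)‖ ≤ 2(‖α_t(h) − h‖ + ‖h‖ ⬝ ‖δ|C‖ ⬝ |t|)`; in particular the supremum
over the unit ball of `C` of `‖α_t(δ(x)) − δ(x)‖` tends to `0` as `t → 0`. -/
theorem inner_generator_continuity
    {A : Type*} [CStarAlgebra A]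
    (α : ℝ → A ≃⋆ₐ[ℂ] A)
    (hgroup : ∀ s t : ℝ, ∀ x : A, α (s + t) x = α s (α t x))
    (hcont : ∀ x : A, Continuous fun t : ℝ => α t x)
    (Dδ : Set A) (δ : A → A)
    (hder : ∀ x ∈ Dδ, ∀ t : ℝ, HasDerivAt (fun s : ℝ => α s x) (α t (δ x)) t)
    (C : StarSubalgebra ℂ A) (hCD : (C : Set A) ⊆ Dδ)
    (h : A) (hsa : IsSelfAdjoint h)
    (hδ : ∀ x ∈ C, δ x = Complex.I • (h * x - x * h))
    (c : ℝ) (hc0 : 0 ≤ c) (hc : ∀ x ∈ C, ‖δ x‖ ≤ c * ‖x‖) :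
    (∀ x ∈ C, ‖x‖ ≤ 1 → ∀ t : ℝ,
        ‖α t (δ x) - δ x‖ ≤ 2 * (‖α t h - h‖ + ‖h‖ * c * |t|)) ∧
    (∀ ε > 0, ∃ η > 0, ∀ t : ℝ, |t| < η → ∀ x ∈ C, ‖x‖ ≤ 1 →
        ‖α t (δ x) - δ x‖ < ε) := by
  -- α 0 is the identity
  have hα0 : ∀ x : A, α 0 x = x := by
    intro x
    have := hgroup 0 0 x
    simp only [add_zero] at this
    exact ((α 0).injective this.symm)
  -- norm preservation
  have hnorm : ∀ t : ℝ, ∀ x : A, ‖α t x‖ = ‖x‖ := fun t x => StarAlgEquiv.norm_map (α t) x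
  -- Lipschitz estimate: ‖α t x - x‖ ≤ (c * ‖x‖) * |t|
  have hlip : ∀ x ∈ C, ∀ t : ℝ, ‖α t x - x‖ ≤ c * ‖x‖ * |t| := by
    intro x hx t
    have hderiv : ∀ s ∈ (Set.univ : Set ℝ),
        HasDerivWithinAt (fun s : ℝ => α s x) (α s (δ x)) Set.univ s := fun s _ =>
      (hder x (hCD hx) s).hasDerivWithinAt
    have hbound : ∀ s ∈ (Set.univ : Set ℝ), ‖α s (δ x)‖ ≤ c * ‖x‖ := by
      intro s _
      rw [hnorm]
      exact hc x hx
    have := (convex_univ (𝕜 := ℝ)).norm_image_sub_le_of_norm_hasDerivWithin_le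
      hderiv hbound (Set.mem_univ (0 : ℝ)) (Set.mem_univ t)
    simpa [hα0 x, Real.norm_eq_abs] using this
  have main : ∀ x ∈ C, ‖x‖ ≤ 1 → ∀ t : ℝ,
      ‖α t (δ x) - δ x‖ ≤ 2 * (‖α t h - h‖ + ‖h‖ * c * |t|) := by
    intro x hx hx1 t
    have hδx := hδ x hx
    have key : α t (δ x) - δ x
        = Complex.I • ((α t h - h) * α t x - α t x * (α t h - h))
          + Complex.I • (h * (α t x - x) - (α t x - x) * h) := by
      rw [hδx]
      simp only [map_smul, map_sub, map_mul, smul_sub, sub_mul, mul_sub]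
      abel
    rw [key]
    have hX : ‖α t x‖ ≤ 1 := by rw [hnorm]; exact hx1
    have e1 : ‖Complex.I • ((α t h - h) * α t x - α t x * (α t h - h))‖
        ≤ 2 * ‖α t h - h‖ := by
      rw [norm_smul, Complex.norm_I, one_mul]
      calc ‖(α t h - h) * α t x - α t x * (α t h - h)‖
          ≤ ‖(α t h - h) * α t x‖ + ‖α t x * (α t h - h)‖ := norm_sub_le _ _
        _ ≤ ‖α t h - h‖ * ‖α t x‖ + ‖α t x‖ * ‖α t h - h‖ :=
            add_le_add (norm_mul_le _ _) (norm_mul_le _ _)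
        _ ≤ ‖α t h - h‖ * 1 + 1 * ‖α t h - h‖ := by
            gcongr <;> positivity
        _ = 2 * ‖α t h - h‖ := by ring
    have e2 : ‖Complex.I • (h * (α t x - x) - (α t x - x) * h)‖
        ≤ 2 * (‖h‖ * c * |t|) := by
      rw [norm_smul, Complex.norm_I, one_mul]
      have hl : ‖α t x - x‖ ≤ c * |t| := by
        calc ‖α t x - x‖ ≤ c * ‖x‖ * |t| := hlip x hx t
          _ ≤ c * 1 * |t| := by gcongr
          _ = c * |t| := by ring
      calc ‖h * (α t x - x) - (α t x - x) * h‖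
          ≤ ‖h * (α t x - x)‖ + ‖(α t x - x) * h‖ := norm_sub_le _ _
        _ ≤ ‖h‖ * ‖α t x - x‖ + ‖α t x - x‖ * ‖h‖ :=
            add_le_add (norm_mul_le _ _) (norm_mul_le _ _)
        _ ≤ ‖h‖ * (c * |t|) + (c * |t|) * ‖h‖ := by gcongr
        _ = 2 * (‖h‖ * c * |t|) := by ring
    calc ‖_ + _‖ ≤ _ + _ := norm_add_le _ _
      _ ≤ 2 * ‖α t h - h‖ + 2 * (‖h‖ * c * |t|) := add_le_add e1 e2
      _ = 2 * (‖α t h - h‖ + ‖h‖ * c * |t|) := by ring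
  refine ⟨main, ?_⟩
  intro ε hε
  -- continuity of t ↦ α t h at 0
  have hcth : Filter.Tendsto (fun t : ℝ => ‖α t h - h‖) (nhds 0) (nhds 0) := by
    have : Filter.Tendsto (fun t : ℝ => α t h - h) (nhds 0) (nhds (α 0 h - h)) :=
      ((hcont h).tendsto 0).sub tendsto_const_nhds
    rw [hα0, sub_self] at this
    simpa using this.norm
  have h1 : ∀ᶠ t : ℝ in nhds 0, ‖α t h - h‖ < ε / 4 :=
    hcth.eventually (Filter.Tendsto.eventually_lt_const (by linarith) Filter.tendsto_id)
  rw [Metric.eventually_nhds_iff] at h1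
  obtain ⟨η1, hη1pos, hη1⟩ := h1
  set M := ‖h‖ * c + 1 with hM
  have hMpos : 0 < M := by positivity
  refine ⟨min η1 (ε / (4 * M)), lt_min hη1pos (by positivity), ?_⟩
  intro t ht x hx hx1
  have ht1 : |t| < η1 := lt_of_lt_of_le ht (min_le_left _ _)
  have ht2 : |t| < ε / (4 * M) := lt_of_lt_of_le ht (min_le_right _ _)
  have b1 : ‖α t h - h‖ < ε / 4 := by
    have : dist t 0 < η1 := by simpa [Real.dist_eq] using ht1
    exact hη1 this
  have b2 : ‖h‖ * c * |t| < ε / 4 := by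
    have habs : 0 ≤ |t| := abs_nonneg t
    have : ‖h‖ * c * |t| ≤ M * |t| := by
      apply mul_le_mul_of_nonneg_right _ habs
      linarith
    calc ‖h‖ * c * |t| ≤ M * |t| := this
      _ < M * (ε / (4 * M)) := by
          apply mul_lt_mul_of_pos_left ht2 hMpos
      _ = ε / 4 := by field_simp
  calc ‖α t (δ x) - δ x‖ ≤ 2 * (‖α t h - h‖ + ‖h‖ * c * |t|) := main x hx hx1 t
    _ < 2 * (ε / 4 + ε / 4) := by linarith
    _ = ε := by ring
end

section
/- Let H₁, H₂ be self-adjoint operators on finite-dimensional Hilbert spaces ℋ₁, ℋ₂ of the same dimension, with increasing eigenvalue sequences (λ_i^{(1)}) and (λ_i^{(2)}) (repeated by multiplicity). For every ε > 0 there is δ > 0 such that: if there exists a unitary W : ℋ₁ → ℋ₂ with max_{|t|≤1} ‖e^{itH₂} W e^{−itH₁} − W‖ < δ, then |λ_i^{(1)} − λ_i^{(2)}| < ε for all i. -/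
/-!
Write `sin (t T) = (e^{itT} - e^{-itT}) / 2i`. The hypothesis at `t = ±h` says that `W` almost
intertwines `e^{±ihT₁}` with `e^{±ihT₂}`, hence `W sin (h T₁)` and `sin (h T₂) W` are `δ`-close.
By Weyl's inequality the `i`-th eigenvalues `sin (h λ¹ᵢ)` and `sin (h λ²ᵢ)` of these operators are
then `δ`-close too, and once `h` is so small that all `h λ` lie in `[-1, 1]`, where `sin` is
increasing with derivative at least `1 / 2`, this gives `|λ¹ᵢ - λ²ᵢ| ≤ 2 δ / h`. The two-point
smoothing `sin` plays the role of the Fourier smoothing `W_f` of the paper.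
-/

open scoped InnerProductSpace InnerProduct
open Complex (I)

theorem NormedSpace.exp_neg_mul_exp (𝕂 : Type*) {𝔸 : Type*} [RCLike 𝕂] [NormedRing 𝔸]
    [NormedAlgebra 𝕂 𝔸] [CompleteSpace 𝔸] (x : 𝔸) : exp (-x) * exp x = 1 := by
  -- `exp_add_of_commute` is stated for normed `ℚ`-algebras
  let +nondep : NormedAlgebra ℚ 𝔸 := .restrictScalars ℚ 𝕂 𝔸
  rw [← exp_add_of_commute (Commute.refl x).neg_left, neg_add_cancel, exp_zero]

theorem NormedSpace.exp_apply_of_apply_eq_smul {𝕂 E : Type*} [RCLike 𝕂] [NormedAddCommGroup E]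
    [NormedSpace 𝕂 E] [CompleteSpace E] {T : E →L[𝕂] E} {x : E} {μ : 𝕂} (h : T x = μ • x) :
    exp T x = exp μ • x := by
  have hpow (k : ℕ) : (T ^ k) x = μ ^ k • x := by
    induction k with
    | zero => simp
    | succ k ih =>
      rw [pow_succ', mul_apply_eq_comp, ih, map_smul, h, smul_smul, ← pow_succ]
  refine ((exp_series_hasSum_exp' (𝕂 := 𝕂) T).mapL (ContinuousLinearMap.apply 𝕂 E x)).unique ?_
  simpa [hpow, smul_smul] using (exp_series_hasSum_exp' (𝕂 := 𝕂) μ).smul_const x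

theorem ContinuousLinearMap.norm_comp_sub_comp_le_of_mul_eq_one {𝕜 E F : Type*}
    [NontriviallyNormedField 𝕜] [NormedAddCommGroup E] [NormedSpace 𝕜 E] [NormedAddCommGroup F]
    [NormedSpace 𝕜 F]
    {u v : E →L[𝕜] E} (hvu : v * u = 1) (hu : ‖u‖ ≤ 1) (W : E →L[𝕜] F) (p : F →L[𝕜] F) :
    ‖W ∘L u - p ∘L W‖ ≤ ‖p ∘L (W ∘L v) - W‖ := by
  have : W ∘L u - p ∘L W = -((p ∘L (W ∘L v) - W) ∘L u) := by
    ext x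
    simp [show v (u x) = x from congr($hvu x)]
  calc ‖W ∘L u - p ∘L W‖ ≤ ‖p ∘L (W ∘L v) - W‖ * ‖u‖ := by
        rw [this, norm_neg]; exact opNorm_comp_le _ _
    _ ≤ ‖p ∘L (W ∘L v) - W‖ := mul_le_of_le_one_right (norm_nonneg _) hu

theorem exists_ne_zero_forall_inner_eq_zero {𝕜 E ι : Type*} [RCLike 𝕜] [NormedAddCommGroup E]
    [InnerProductSpace 𝕜 E] [Fintype ι] (v : ι → E)
    (hv : Fintype.card ι < Module.finrank 𝕜 E) : ∃ x ≠ (0 : E), ∀ i, ⟪v i, x⟫_𝕜 = 0 := by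
  have : FiniteDimensional 𝕜 (Submodule.span 𝕜 (Set.range v)) :=
    FiniteDimensional.span_of_finite 𝕜 (Set.finite_range v)
  have hspan : Submodule.span 𝕜 (Set.range v) ≠ ⊤ := by
    intro htop
    have := finrank_range_le_card (R := 𝕜) v
    rw [Set.finrank, htop, finrank_top] at this
    omega
  obtain ⟨x, hx, hx0⟩ := (Submodule.ne_bot_iff _).mp (mt Submodule.orthogonal_eq_bot_iff.mp hspan)
  exact ⟨x, hx0, fun i =>
    Submodule.inner_right_of_mem_orthogonal (Submodule.subset_span (Set.mem_range_self i)) hx⟩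

namespace OrthonormalBasis

variable {𝕜 E ι : Type*} [RCLike 𝕜] [NormedAddCommGroup E] [InnerProductSpace 𝕜 E] [Fintype ι]
  {b : OrthonormalBasis ι 𝕜 E} {T : E →L[𝕜] E}

theorem inner_apply_of_apply_eq_smul {μ : ι → 𝕜} (hT : ∀ i, T (b i) = μ i • b i) (x : E)
    (i : ι) : ⟪b i, T x⟫_𝕜 = μ i * ⟪b i, x⟫_𝕜 := by
  have : T x = ∑ j, (μ j * ⟪b j, x⟫_𝕜) • b j := by
    conv_lhs => rw [← b.sum_repr' x]
    simp [hT, smul_smul, mul_comm]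
  rw [this, b.orthonormal.inner_right_fintype]

theorem opNorm_le_of_apply_eq_smul {μ : ι → 𝕜} (hT : ∀ i, T (b i) = μ i • b i) {C : ℝ}
    (hC : 0 ≤ C) (hμ : ∀ i, ‖μ i‖ ≤ C) : ‖T‖ ≤ C := by
  refine T.opNorm_le_bound hC fun x => ?_
  have hsq : ‖T x‖ ^ 2 ≤ (C * ‖x‖) ^ 2 := calc
    ‖T x‖ ^ 2 = ∑ i, ‖μ i‖ ^ 2 * ‖⟪b i, x⟫_𝕜‖ ^ 2 := by
      simp [← b.sum_sq_norm_inner_right (T x), inner_apply_of_apply_eq_smul hT, mul_pow]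
    _ ≤ ∑ i, C ^ 2 * ‖⟪b i, x⟫_𝕜‖ ^ 2 := by gcongr with i; exact hμ i
    _ = (C * ‖x‖) ^ 2 := by rw [← Finset.mul_sum, b.sum_sq_norm_inner_right]; ring
  exact (pow_le_pow_iff_left₀ (norm_nonneg _) (by positivity) two_ne_zero).mp hsq

theorem re_inner_apply_self_eq_sum {α : ι → ℝ} (hT : ∀ i, T (b i) = (α i : 𝕜) • b i) (x : E) :
    RCLike.re ⟪x, T x⟫_𝕜 = ∑ i, α i * ‖⟪b i, x⟫_𝕜‖ ^ 2 := by
  rw [← b.sum_inner_mul_inner, map_sum]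
  refine Finset.sum_congr rfl fun i _ => ?_
  rw [inner_apply_of_apply_eq_smul hT, mul_left_comm, RCLike.re_ofReal_mul,
    inner_mul_symm_re_eq_norm, norm_mul, norm_inner_symm, sq]

variable [LinearOrder ι] {α : ι → ℝ}

theorem re_inner_apply_self_le (hT : ∀ i, T (b i) = (α i : 𝕜) • b i) (hα : Monotone α) {i : ι}
    {x : E} (hx : ∀ j, i < j → ⟪b j, x⟫_𝕜 = 0) : RCLike.re ⟪x, T x⟫_𝕜 ≤ α i * ‖x‖ ^ 2 := by
  rw [re_inner_apply_self_eq_sum hT, ← b.sum_sq_norm_inner_right x, Finset.mul_sum]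
  refine Finset.sum_le_sum fun j _ => ?_
  rcases le_or_gt j i with hji | hij
  · exact mul_le_mul_of_nonneg_right (hα hji) (sq_nonneg _)
  · simp [hx j hij]

theorem le_re_inner_apply_self (hT : ∀ i, T (b i) = (α i : 𝕜) • b i) (hα : Monotone α) {i : ι}
    {x : E} (hx : ∀ j, j < i → ⟪b j, x⟫_𝕜 = 0) : α i * ‖x‖ ^ 2 ≤ RCLike.re ⟪x, T x⟫_𝕜 := by
  rw [re_inner_apply_self_eq_sum hT, ← b.sum_sq_norm_inner_right x, Finset.mul_sum]
  refine Finset.sum_le_sum fun j _ => ?_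
  rcases le_or_gt i j with hij | hji
  · exact mul_le_mul_of_nonneg_right (hα hij) (sq_nonneg _)
  · simp [hx j hji]

theorem sub_le_norm_sub_of_apply_eq_smul {n : ℕ} {a c : OrthonormalBasis (Fin n) 𝕜 E}
    {A B : E →L[𝕜] E} {α β : Fin n → ℝ} (hA : ∀ i, A (a i) = (α i : 𝕜) • a i) (hB : ∀ i, B (c i) = (β i : 𝕜) • c i)
    (hα : Monotone α) (hβ : Monotone β) (i : Fin n) : β i - α i ≤ ‖A - B‖ := by
  -- Courant–Fischer, with a test vector orthogonal to `n - 1` of the eigenvectors.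
  let v : {j // j ≠ i} → E := fun j => if i < j.1 then a j else c j
  have hcard : Fintype.card {j // j ≠ i} < Module.finrank 𝕜 E := by
    rw [Fintype.card_subtype_compl, Module.finrank_eq_card_basis a.toBasis]
    simp only [Fintype.card_fin, Fintype.card_unique]
    have := i.pos
    omega
  obtain ⟨x, hx0, hx⟩ := exists_ne_zero_forall_inner_eq_zero v hcard
  have hAx := a.re_inner_apply_self_le hA hα fun j hij => by simpa [v, hij] using hx ⟨j, hij.ne'⟩
  have hBx := c.le_re_inner_apply_self hB hβ fun j hji => by
    have hij : ¬ i < j := not_lt.2 hji.le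
    simpa [v, hij] using hx ⟨j, hji.ne⟩
  have hAB : RCLike.re ⟪x, B x⟫_𝕜 - RCLike.re ⟪x, A x⟫_𝕜 ≤ ‖A - B‖ * ‖x‖ ^ 2 := calc
    _ = RCLike.re ⟪x, (B - A) x⟫_𝕜 := by simp [inner_sub_right]
    _ ≤ ‖x‖ * ‖(B - A) x‖ := (RCLike.re_le_norm _).trans (norm_inner_le_norm _ _)
    _ ≤ ‖x‖ * (‖B - A‖ * ‖x‖) := by gcongr; exact (B - A).le_opNorm x
    _ = ‖A - B‖ * ‖x‖ ^ 2 := by rw [norm_sub_rev]; ring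
  refine le_of_mul_le_mul_right ?_ (by positivity : 0 < ‖x‖ ^ 2)
  rw [sub_mul]
  linarith

theorem abs_sub_le_norm_sub_of_apply_eq_smul {n : ℕ} {a c : OrthonormalBasis (Fin n) 𝕜 E}
    {A B : E →L[𝕜] E} {α β : Fin n → ℝ} (hA : ∀ i, A (a i) = (α i : 𝕜) • a i) (hB : ∀ i, B (c i) = (β i : 𝕜) • c i)
    (hα : Monotone α) (hβ : Monotone β) (i : Fin n) : |α i - β i| ≤ ‖A - B‖ :=
  abs_sub_le_iff.2
    ⟨norm_sub_rev A B ▸ sub_le_norm_sub_of_apply_eq_smul hB hA hβ hα i,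
      sub_le_norm_sub_of_apply_eq_smul hA hB hα hβ i⟩

theorem abs_sub_le_norm_comp_sub_comp_of_apply_eq_smul {F : Type*} [NormedAddCommGroup F]
    [InnerProductSpace 𝕜 F] [CompleteSpace E] [CompleteSpace F] {n : ℕ}
    {a : OrthonormalBasis (Fin n) 𝕜 E} {c : OrthonormalBasis (Fin n) 𝕜 F} {A : E →L[𝕜] E}
    {B : F →L[𝕜] F} {α β : Fin n → ℝ} (hA : ∀ i, A (a i) = (α i : 𝕜) • a i)
    (hB : ∀ i, B (c i) = (β i : 𝕜) • c i) (hα : Monotone α) (hβ : Monotone β)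
    {W : E →L[𝕜] F} (hW : W ∘L W† = 1) (hW' : W† ∘L W = 1) (i : Fin n) :
    |α i - β i| ≤ ‖W ∘L A - B ∘L W‖ := by
  let e : E ≃ₗᵢ[𝕜] F :=
    { toFun := W
      map_add' := W.map_add
      map_smul' := W.map_smul
      invFun := W†
      left_inv x := congr($hW' x)
      right_inv y := congr($hW y)
      norm_map' := W.norm_map_iff_adjoint_comp_self.mpr hW' }
  have hB' (j : Fin n) : (W† ∘L B ∘L W) (c.map e.symm j) = (β j : 𝕜) • c.map e.symm j := by
    change (W†) (B (W ((W†) (c j)))) = (β j : 𝕜) • (W†) (c j)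
    rw [show W ((W†) (c j)) = c j from congr($hW (c j)), hB, map_smul]
  have hnorm : ‖A - (W†) ∘L B ∘L W‖ = ‖W ∘L A - B ∘L W‖ := by
    rw [← e.symm.toLinearIsometry.norm_toContinuousLinearMap_comp]
    congr 1
    ext x
    change A x - (W†) (B (W x)) = (W†) (W (A x) - B (W x))
    rw [map_sub, show (W†) (W (A x)) = A x from congr($hW' (A x))]
  exact hnorm ▸ abs_sub_le_norm_sub_of_apply_eq_smul hA hB' hα hβ i

end OrthonormalBasis

theorem Real.abs_sub_le_two_mul_abs_sin_sub_sin {a b : ℝ} (ha : |a| ≤ 1) (hb : |b| ≤ 1) :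
    |a - b| ≤ 2 * |sin a - sin b| := by
  wlog hba : b ≤ a generalizing a b
  · rw [abs_sub_comm a, abs_sub_comm (sin a)]
    exact this hb ha (le_of_not_ge hba)
  have hcos : ∀ x ∈ interior (Set.Icc (-1 : ℝ) 1), 1 / 2 ≤ deriv sin x := by
    intro x hx
    rw [interior_Icc] at hx
    have : x ^ 2 ≤ 1 := by nlinarith [hx.1, hx.2]
    rw [Real.deriv_sin]
    linarith [Real.one_sub_sq_div_two_le_cos (x := x)]
  have := (convex_Icc (-1 : ℝ) 1).mul_sub_le_image_sub_of_le_deriv continuous_sin.continuousOn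
    differentiable_sin.differentiableOn hcos b (abs_le.mp hb) a (abs_le.mp ha) hba
  rw [abs_of_nonneg (sub_nonneg.2 hba)]
  linarith [le_abs_self (sin a - sin b)]

section Evolution

variable {E : Type*} [NormedAddCommGroup E] [NormedSpace ℂ E]

noncomputable def expItSMul (T : E →L[ℂ] E) (t : ℝ) : E →L[ℂ] E :=
  NormedSpace.exp (((t : ℂ) * I) • T)

/-- `sin (t T)`, through Euler's formula, so that only the exponentials of the hypothesis occur. -/
noncomputable def sinSMul (T : E →L[ℂ] E) (t : ℝ) : E →L[ℂ] E :=
  (2 * I)⁻¹ • (expItSMul T t - expItSMul T (-t))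

variable [CompleteSpace E] {T : E →L[ℂ] E}

theorem expItSMul_neg_mul (T : E →L[ℂ] E) (t : ℝ) : expItSMul T (-t) * expItSMul T t = 1 := by
  simpa [expItSMul] using NormedSpace.exp_neg_mul_exp ℂ (((t : ℂ) * I) • T)

theorem expItSMul_apply_of_apply_eq_smul {x : E} {α : ℝ} (h : T x = (α : ℂ) • x) (t : ℝ) :
    expItSMul T t x = Complex.exp ((t * α : ℝ) * I) • x := by
  rw [expItSMul, NormedSpace.exp_apply_of_apply_eq_smul (μ := (t : ℂ) * I * α)
    (by rw [smul_apply, h, smul_smul]), ← Complex.exp_eq_exp_ℂ]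
  push_cast
  ring_nf

theorem sinSMul_apply_of_apply_eq_smul {x : E} {α : ℝ} (h : T x = (α : ℂ) • x) (t : ℝ) :
    sinSMul T t x = (Real.sin (t * α) : ℂ) • x := by
  rw [sinSMul, smul_apply, sub_apply, expItSMul_apply_of_apply_eq_smul h,
    expItSMul_apply_of_apply_eq_smul h, ← sub_smul, smul_smul, Complex.ofReal_sin, Complex.sin]
  congr 1
  push_cast
  field_simp
  ring_nf
  rw [Complex.I_sq]
  ring

end Evolution

theorem norm_expItSMul_le_one {E ι : Type*} [NormedAddCommGroup E] [InnerProductSpace ℂ E]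
    [CompleteSpace E] [Fintype ι] {b : OrthonormalBasis ι ℂ E} {T : E →L[ℂ] E} {α : ι → ℝ}
    (hT : ∀ i, T (b i) = (α i : ℂ) • b i) (t : ℝ) : ‖expItSMul T t‖ ≤ 1 :=
  b.opNorm_le_of_apply_eq_smul (fun i => expItSMul_apply_of_apply_eq_smul (hT i) t) zero_le_one
    fun i => by rw [Complex.norm_exp_ofReal_mul_I]

theorem norm_comp_sinSMul_sub_sinSMul_comp_lt {E F ι : Type*} [NormedAddCommGroup E]
    [InnerProductSpace ℂ E] [CompleteSpace E] [NormedAddCommGroup F] [NormedSpace ℂ F]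
    [Fintype ι] {b : OrthonormalBasis ι ℂ E} {α : ι → ℝ} {T₁ : E →L[ℂ] E}
    (hT₁ : ∀ i, T₁ (b i) = (α i : ℂ) • b i) (T₂ : F →L[ℂ] F) (W : E →L[ℂ] F) {t δ : ℝ}
    (hW : ∀ s ∈ ({t, -t} : Set ℝ), ‖expItSMul T₂ s ∘L (W ∘L expItSMul T₁ (-s)) - W‖ < δ) :
    ‖W ∘L sinSMul T₁ t - sinSMul T₂ t ∘L W‖ < δ := by
  have key (s : ℝ) (hs : s ∈ ({t, -t} : Set ℝ)) :
      ‖W ∘L expItSMul T₁ s - expItSMul T₂ s ∘L W‖ < δ :=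
    (ContinuousLinearMap.norm_comp_sub_comp_le_of_mul_eq_one (expItSMul_neg_mul T₁ s)
      (norm_expItSMul_le_one hT₁ s) W _).trans_lt (hW s hs)
  have hsplit : W ∘L sinSMul T₁ t - sinSMul T₂ t ∘L W = (2 * I)⁻¹ •
      ((W ∘L expItSMul T₁ t - expItSMul T₂ t ∘L W) -
        (W ∘L expItSMul T₁ (-t) - expItSMul T₂ (-t) ∘L W)) := by
    simp only [sinSMul, ContinuousLinearMap.comp_smul, ContinuousLinearMap.smul_comp,
      ContinuousLinearMap.comp_sub, ContinuousLinearMap.sub_comp, smul_sub]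
    abel
  rw [hsplit, norm_smul, show ‖(2 * I)⁻¹‖ = 2⁻¹ by simp]
  linarith [norm_sub_le (W ∘L expItSMul T₁ t - expItSMul T₂ t ∘L W)
    (W ∘L expItSMul T₁ (-t) - expItSMul T₂ (-t) ∘L W), key t (by simp), key (-t) (by simp)]

theorem mul_abs_sub_le_two_mul_norm_comp_sinSMul_sub_sinSMul_comp {E F : Type*}
    [NormedAddCommGroup E] [InnerProductSpace ℂ E] [CompleteSpace E] [NormedAddCommGroup F]
    [InnerProductSpace ℂ F] [CompleteSpace F] {n : ℕ} {a : OrthonormalBasis (Fin n) ℂ E}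
    {c : OrthonormalBasis (Fin n) ℂ F} {A : E →L[ℂ] E} {B : F →L[ℂ] F} {α β : Fin n → ℝ}
    (hA : ∀ i, A (a i) = (α i : ℂ) • a i) (hB : ∀ i, B (c i) = (β i : ℂ) • c i)
    (hα : Monotone α) (hβ : Monotone β) {W : E →L[ℂ] F} (hW : W ∘L W† = 1) (hW' : W† ∘L W = 1)
    {t : ℝ} (ht : 0 < t) (hαt : ∀ i, |t * α i| ≤ 1) (hβt : ∀ i, |t * β i| ≤ 1) (i : Fin n) :
    t * |α i - β i| ≤ 2 * ‖W ∘L sinSMul A t - sinSMul B t ∘L W‖ := by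
  have hsin : MonotoneOn Real.sin (Set.Icc (-1) 1) :=
    Real.strictMonoOn_sin.monotoneOn.mono
      (Set.Icc_subset_Icc (by linarith [Real.pi_gt_three]) (by linarith [Real.pi_gt_three]))
  have hmono {γ : Fin n → ℝ} (hγ : Monotone γ) (hγt : ∀ i, |t * γ i| ≤ 1) :
      Monotone fun i => Real.sin (t * γ i) := fun i j hij =>
    hsin (abs_le.mp (hγt i)) (abs_le.mp (hγt j)) (by gcongr; exact hγ hij)
  calc t * |α i - β i| = |t * α i - t * β i| := by rw [← mul_sub, abs_mul, abs_of_pos ht]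
    _ ≤ 2 * |Real.sin (t * α i) - Real.sin (t * β i)| :=
      Real.abs_sub_le_two_mul_abs_sin_sub_sin (hαt i) (hβt i)
    _ ≤ 2 * ‖W ∘L sinSMul A t - sinSMul B t ∘L W‖ := by
      gcongr
      exact OrthonormalBasis.abs_sub_le_norm_comp_sub_comp_of_apply_eq_smul
        (fun j => sinSMul_apply_of_apply_eq_smul (hA j) t)
        (fun j => sinSMul_apply_of_apply_eq_smul (hB j) t) (hmono hα hαt) (hmono hβ hβt) hW hW' i

theorem exists_pos_le_one_forall_abs_mul_le_one {ι : Type*} [Finite ι] (f : ι → ℝ) :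
    ∃ t, 0 < t ∧ t ≤ 1 ∧ ∀ i, |t * f i| ≤ 1 := by
  obtain ⟨M, hM⟩ := Finite.exists_le fun i => |f i|
  have hM1 : 0 < max M 1 := lt_max_of_lt_right one_pos
  refine ⟨(max M 1)⁻¹, inv_pos.2 hM1, inv_le_one_of_one_le₀ (le_max_right _ _), fun i => ?_⟩
  rw [abs_mul, abs_of_pos (inv_pos.2 hM1)]
  exact inv_mul_le_one_of_le₀ ((hM i).trans (le_max_left _ _)) hM1.le

theorem eigenvalue_comparison_almost_intertwining_general
    {H1 H2 : Type*}
    [NormedAddCommGroup H1] [InnerProductSpace ℂ H1] [FiniteDimensional ℂ H1]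
    [NormedAddCommGroup H2] [InnerProductSpace ℂ H2] [FiniteDimensional ℂ H2]
    (n : ℕ) (T1 : H1 →L[ℂ] H1) (T2 : H2 →L[ℂ] H2)
    (lam1 lam2 : Fin n → ℝ) (hm1 : Monotone lam1) (hm2 : Monotone lam2)
    (b1 : OrthonormalBasis (Fin n) ℂ H1) (b2 : OrthonormalBasis (Fin n) ℂ H2)
    (he1 : ∀ i, T1 (b1 i) = (lam1 i : ℂ) • b1 i)
    (he2 : ∀ i, T2 (b2 i) = (lam2 i : ℂ) • b2 i) :
    ∀ ε > 0, ∃ δ > 0, ∀ W : H1 →L[ℂ] H2,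
      W.comp (ContinuousLinearMap.adjoint W) = 1 →
      (ContinuousLinearMap.adjoint W).comp W = 1 →
      (∀ t : ℝ, |t| ≤ 1 →
        ‖(NormedSpace.exp (((t : ℂ) * Complex.I) • T2)).comp
            (W.comp (NormedSpace.exp ((-(t : ℂ) * Complex.I) • T1))) - W‖ < δ) →
      ∀ i, |lam1 i - lam2 i| < ε := by
  intro ε hε
  obtain ⟨t, ht0, ht1, ht⟩ := exists_pos_le_one_forall_abs_mul_le_one (Sum.elim lam1 lam2)
  refine ⟨t * ε / 2, by positivity, fun W hW hW' hev i => ?_⟩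
  have hsmall := norm_comp_sinSMul_sub_sinSMul_comp_lt he1 T2 W (t := t) fun s hs => by
    have : |s| ≤ 1 := by rcases hs with rfl | rfl <;> simpa [abs_of_pos ht0] using ht1
    simpa [expItSMul] using hev s this
  have hcmp := mul_abs_sub_le_two_mul_norm_comp_sinSMul_sub_sinSMul_comp he1 he2 hm1 hm2 hW hW'
    ht0 (fun j => ht (.inl j)) (fun j => ht (.inr j)) i
  exact lt_of_mul_lt_mul_left (by linarith) ht0.le

/-- Let `H₁, H₂` be self-adjoint operators on finite-dimensional Hilbert
spaces of the same dimension `n`, with increasing eigenvalue lists `λ¹, λ²` (with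
multiplicity, realized by orthonormal eigenbases). For every `ε > 0` there is `δ > 0`
such that if some unitary `W : ℋ₁ → ℋ₂` satisfies
`max_{|t|≤1} ‖e^{itH₂} W e^{−itH₁} − W‖ < δ`, then `|λ¹ᵢ − λ²ᵢ| < ε` for all `i`. -/
theorem eigenvalue_comparison_almost_intertwining
    {H1 H2 : Type*}
    [NormedAddCommGroup H1] [InnerProductSpace ℂ H1] [FiniteDimensional ℂ H1]
    [NormedAddCommGroup H2] [InnerProductSpace ℂ H2] [FiniteDimensional ℂ H2]
    (n : ℕ) (T1 : H1 →L[ℂ] H1) (T2 : H2 →L[ℂ] H2)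
    (hT1 : IsSelfAdjoint T1) (hT2 : IsSelfAdjoint T2)
    (lam1 lam2 : Fin n → ℝ) (hm1 : Monotone lam1) (hm2 : Monotone lam2)
    (b1 : OrthonormalBasis (Fin n) ℂ H1) (b2 : OrthonormalBasis (Fin n) ℂ H2)
    (he1 : ∀ i, T1 (b1 i) = (lam1 i : ℂ) • b1 i)
    (he2 : ∀ i, T2 (b2 i) = (lam2 i : ℂ) • b2 i) :
    ∀ ε > 0, ∃ δ > 0, ∀ W : H1 →L[ℂ] H2,
      W.comp (ContinuousLinearMap.adjoint W) = 1 →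
      (ContinuousLinearMap.adjoint W).comp W = 1 →
      (∀ t : ℝ, |t| ≤ 1 →
        ‖(NormedSpace.exp (((t : ℂ) * Complex.I) • T2)).comp
            (W.comp (NormedSpace.exp ((-(t : ℂ) * Complex.I) • T1))) - W‖ < δ) →
      ∀ i, |lam1 i - lam2 i| < ε :=
  eigenvalue_comparison_almost_intertwining_general n T1 T2 lam1 lam2 hm1 hm2 b1 b2 he1 he2
end

section
/- Let α be a flow on a unital C*-algebra A with generator δ, let w ∈ A with ‖w‖ ≤ 1, b = b* ∈ D(δ), and T > 0. Define b₁ = (2T)^{−1} ∫_{−T}^{T} α_t(w) b α_t(w)* dt. Then b₁ is self-adjoint with ‖b₁‖ ≤ ‖b‖, b₁ ∈ D(δ), and δ(b₁) = (2T)^{−1}(α_T(w) b α_T(w)* − α_{−T}(w) b α_{−T}(w)*) + (2T)^{−1} ∫_{−T}^{T} α_t(w) δ(b) α_t(w)* dt; hence ‖δ(b₁)‖ ≤ ‖b‖/T + ‖δ(b)‖. -/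
open MeasureTheory intervalIntegral

/-- The continuous `ℝ`-linear map underlying a star-algebra automorphism of a C*-algebra. -/
noncomputable def starAlgEquivCLM {A : Type*} [CStarAlgebra A] (e : A ≃⋆ₐ[ℂ] A) : A →L[ℝ] A :=
  { toFun := e
    map_add' := map_add e
    map_smul' := fun r x => by
      rw [← algebraMap_smul ℂ r x, _root_.map_smul e _ _, algebraMap_smul]; rfl
    cont := (StarAlgEquiv.isometry e).continuous }

@[simp] lemma starAlgEquivCLM_apply {A : Type*} [CStarAlgebra A] (e : A ≃⋆ₐ[ℂ] A) (x : A) :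
    starAlgEquivCLM e x = e x := rfl

/-- Let `α` be a flow with generator `δ` on a unital C*-algebra, `‖w‖ ≤ 1`
with `w ∈ D(δ)`, `b = b* ∈ D(δ)`, `T > 0`, and
`b₁ = (2T)⁻¹ ∫_{−T}^{T} α_t(w) b α_t(w)* dt`. Then `b₁` is self-adjoint, `‖b₁‖ ≤ ‖b‖`,
`b₁ ∈ D(δ)`, `δ(b₁)` equals the stated boundary-plus-integral expression, and
`‖δ(b₁)‖ ≤ ‖b‖/T + ‖δ(b)‖`. -/
theorem averaged_element_derivative
    {A : Type*} [CStarAlgebra A]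
    (α : ℝ → A ≃⋆ₐ[ℂ] A)
    (hgroup : ∀ s t : ℝ, ∀ x : A, α (s + t) x = α s (α t x))
    (hcont : ∀ x : A, Continuous fun t : ℝ => α t x)
    (Dδ : Set A) (δ : A → A)
    (hgen : ∀ x : A, x ∈ Dδ ↔ ∃ y : A, HasDerivAt (fun t : ℝ => α t x) y 0)
    (hδ : ∀ x ∈ Dδ, HasDerivAt (fun t : ℝ => α t x) (δ x) 0)
    (w b : A) (hw : ‖w‖ ≤ 1) (hwD : w ∈ Dδ)
    (hbD : b ∈ Dδ) (hbsa : IsSelfAdjoint b)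
    (T : ℝ) (hT : 0 < T)
    (b₁ : A)
    (hb₁ : b₁ = (2 * T)⁻¹ • ∫ t in (-T)..T, α t w * b * star (α t w)) :
    IsSelfAdjoint b₁ ∧ ‖b₁‖ ≤ ‖b‖ ∧ b₁ ∈ Dδ ∧
    δ b₁ = (2 * T)⁻¹ • (α T w * b * star (α T w) - α (-T) w * b * star (α (-T) w))
        + (2 * T)⁻¹ • ∫ t in (-T)..T, α t w * δ b * star (α t w) ∧
    ‖δ b₁‖ ≤ ‖b‖ / T + ‖δ b‖ := by
  -- notation
  set g : ℝ → A → A := fun s c => α s w * c * star (α s w) with hg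
  have hgc : ∀ c : A, Continuous fun s => g s c := fun c =>
    ((hcont w).mul continuous_const).mul (hcont w).star
  have hgint : ∀ (c : A) (u v : ℝ), IntervalIntegrable (fun s => g s c) volume u v :=
    fun c u v => (hgc c).intervalIntegrable u v
  have hgnorm : ∀ (s : ℝ) (c : A), ‖g s c‖ ≤ ‖c‖ := by
    intro s c
    have h1 : ‖α s w‖ ≤ 1 := by rw [StarAlgEquiv.norm_map]; exact hw
    have h2 : ‖star (α s w)‖ ≤ 1 := by rw [norm_star, StarAlgEquiv.norm_map]; exact hw
    calc ‖α s w * c * star (α s w)‖ ≤ ‖α s w * c‖ * ‖star (α s w)‖ := norm_mul_le _ _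
      _ ≤ ‖α s w‖ * ‖c‖ * ‖star (α s w)‖ :=
        mul_le_mul_of_nonneg_right (norm_mul_le _ _) (norm_nonneg _)
      _ ≤ 1 * ‖c‖ * ‖star (α s w)‖ :=
        mul_le_mul_of_nonneg_right (mul_le_mul_of_nonneg_right h1 (norm_nonneg c))
          (norm_nonneg _)
      _ ≤ 1 * ‖c‖ * 1 := mul_le_mul_of_nonneg_left h2 (by positivity)
      _ = ‖c‖ := by ring
  have hgsub : ∀ (s : ℝ) (c c' : A), g s c - g s c' = g s (c - c') := by
    intro s c c'; simp only [hg, mul_sub, sub_mul]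
  have hgsmul : ∀ (s r : ℝ) (c : A), g s (r • c) = r • g s c := by
    intro s r c; simp only [hg, mul_smul_comm, smul_mul_assoc]
  have h2T : (0:ℝ) < 2 * T := by linarith
  have hα0 : ∀ x : A, α 0 x = x := by
    intro x
    have h := hgroup 0 0 x
    rw [add_zero] at h
    exact (α 0).injective h.symm
  have hαsmul : ∀ (h r : ℝ) (x : A), α h (r • x) = r • α h x := by
    intro h r x
    rw [← algebraMap_smul ℂ r x, _root_.map_smul (α h) _ _, algebraMap_smul]
  -- self-adjointness
  have hsa : IsSelfAdjoint b₁ := by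
    rw [hb₁, IsSelfAdjoint, star_smul, star_trivial]
    congr 1
    calc star (∫ t in (-T)..T, g t b) = ∫ t in (-T)..T, star (g t b) :=
        ((starL' ℝ : A ≃L[ℝ] A).toContinuousLinearMap.intervalIntegral_comp_comm
          (hgint b (-T) T)).symm
      _ = ∫ t in (-T)..T, g t b := by
        apply intervalIntegral.integral_congr
        intro s _
        show star (α s w * b * star (α s w)) = α s w * b * star (α s w)
        simp only [star_mul, star_star, hbsa.star_eq, mul_assoc]
  -- norm bound for b₁
  have hnormint : ∀ c : A, ‖∫ t in (-T)..T, g t c‖ ≤ ‖c‖ * (2 * T) := by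
    intro c
    have := intervalIntegral.norm_integral_le_of_norm_le_const
      (a := -T) (b := T) (C := ‖c‖) (f := fun t => g t c) (fun s _ => hgnorm s c)
    calc ‖∫ t in (-T)..T, g t c‖ ≤ ‖c‖ * |T - (-T)| := this
      _ = ‖c‖ * (2 * T) := by rw [abs_of_pos (by linarith)]; ring
  have hnb₁ : ‖b₁‖ ≤ ‖b‖ := by
    rw [hb₁, norm_smul, norm_inv, Real.norm_eq_abs, abs_of_pos h2T]
    calc (2*T)⁻¹ * ‖∫ t in (-T)..T, g t b‖ ≤ (2*T)⁻¹ * (‖b‖ * (2*T)) :=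
      mul_le_mul_of_nonneg_left (hnormint b) (by positivity)
      _ = ‖b‖ := by field_simp
  -- the derivative computation
  set Φ : ℝ → A := fun u => ∫ s in (-T)..u, g s b with hΦdef
  have hΦderiv : ∀ u : ℝ, HasDerivAt Φ (g u b) u := by
    intro u
    exact intervalIntegral.integral_hasDerivAt_right (hgint b (-T) u)
      (hgc b).stronglyMeasurable.stronglyMeasurableAtFilter (hgc b).continuousAt
  have hΦsub : ∀ h : ℝ, Φ (T + h) - Φ (-T + h) = ∫ s in (-T + h)..(T + h), g s b := by
    intro h
    exact intervalIntegral.integral_interval_sub_left (hgint b (-T) (T+h)) (hgint b (-T) (-T+h))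
  -- key identity: α h b₁ = (2T)⁻¹ • ∫_{-T+h}^{T+h} g s (α h b)
  have hkey : ∀ h : ℝ,
      α h b₁ = (2 * T)⁻¹ • ∫ s in (-T + h)..(T + h), g s (α h b) := by
    intro h
    rw [hb₁, hαsmul]
    congr 1
    have h1 : α h (∫ t in (-T)..T, g t b) = ∫ t in (-T)..T, α h (g t b) := by
      have := ((starAlgEquivCLM (α h)).intervalIntegral_comp_comm (hgint b (-T) T)).symm
      simpa using this
    rw [h1]
    have h2 : ∀ t : ℝ, α h (g t b) = g (h + t) (α h b) := by
      intro t
      simp only [hg, map_mul, map_star, ← hgroup]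
    rw [intervalIntegral.integral_congr (fun t _ => h2 t)]
    have h3 : (∫ t in (-T)..T, g (h + t) (α h b)) = ∫ s in (h + -T)..(h + T), g s (α h b) :=
      intervalIntegral.integral_comp_add_left (fun s => g s (α h b)) h
    rw [h3, add_comm h (-T), add_comm h T]
  -- D part
  set D : ℝ → A := fun h => (2 * T)⁻¹ • (Φ (T + h) - Φ (-T + h)) with hDdef
  have hDeriv : HasDerivAt D ((2 * T)⁻¹ • (g T b - g (-T) b)) 0 := by
    have h1 : HasDerivAt (fun h : ℝ => Φ (T + h)) (g T b) 0 := by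
      apply HasDerivAt.comp_const_add
      rw [add_zero]; exact hΦderiv T
    have h2 : HasDerivAt (fun h : ℝ => Φ (-T + h)) (g (-T) b) 0 := by
      apply HasDerivAt.comp_const_add
      rw [add_zero]; exact hΦderiv (-T)
    exact (h1.sub h2).const_smul _
  -- E part
  set W : A := (2 * T)⁻¹ • ∫ s in (-T)..T, g s (δ b) with hWdef
  set E : ℝ → A := fun h => α h b₁ - D h with hEdef
  have hE0 : E 0 = 0 := by
    simp only [hEdef, hDdef, hΦdef, hα0, add_zero, intervalIntegral.integral_same, sub_zero]
    rw [hb₁]; exact sub_self _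
  have hEexpr : ∀ h : ℝ, E h = (2 * T)⁻¹ • ∫ s in (-T + h)..(T + h), g s (α h b - b) := by
    intro h
    simp only [hEdef, hDdef, hkey h, hΦsub h, ← smul_sub]
    congr 1
    rw [← intervalIntegral.integral_sub (hgint (α h b) _ _) (hgint b _ _)]
    exact intervalIntegral.integral_congr fun s _ => hgsub s _ _
  -- remainder r h := α h b - b - h • δ b is o(h)
  have hbderiv : HasDerivAt (fun t : ℝ => α t b) (δ b) 0 := hδ b hbD
  have hrlo : (fun h : ℝ => α h b - b - h • δ b) =o[nhds 0] (fun h : ℝ => h) := by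
    have := hasDerivAt_iff_isLittleO.mp hbderiv
    simpa [hα0] using this
  -- E h - h • W is o(h)
  have hElo : (fun h : ℝ => E h - h • W) =o[nhds 0] (fun h : ℝ => h) := by
    have hident : ∀ h : ℝ, E h - h • W =
        (2 * T)⁻¹ • (∫ s in (-T + h)..(T + h), g s (α h b - b - h • δ b))
        + (2 * T)⁻¹ • (∫ s in T..(T + h), g s (h • δ b))
        - (2 * T)⁻¹ • (∫ s in (-T)..(-T + h), g s (h • δ b)) := by
      intro h
      have e2 : (∫ s in (-T)..T, g s (h • δ b)) = h • ∫ s in (-T)..T, g s (δ b) := by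
        rw [intervalIntegral.integral_congr (fun s _ => hgsmul s h (δ b))]
        exact intervalIntegral.integral_smul h _
      rw [hEexpr h, hWdef, smul_comm (h:ℝ) ((2*T:ℝ)⁻¹) (∫ s in (-T)..T, g s (δ b)), ← e2]
      rw [← smul_add, ← smul_sub, ← smul_sub]
      congr 1
      have i1 : (∫ s in (-T + h)..(T + h), g s (α h b - b)) =
          (∫ s in (-T + h)..(T + h), g s (α h b - b - h • δ b))
          + ∫ s in (-T + h)..(T + h), g s (h • δ b) := by
        rw [← intervalIntegral.integral_add (hgint _ _ _) (hgint _ _ _)]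
        apply intervalIntegral.integral_congr
        intro s _
        show g s (α h b - b) = g s (α h b - b - h • δ b) + g s (h • δ b)
        rw [← hgsub s (α h b - b) (h • δ b)]
        abel
      rw [i1]
      have c1 : (∫ s in (-T + h)..(-T), g s (h • δ b))
          + (∫ s in (-T)..(T + h), g s (h • δ b))
          = ∫ s in (-T + h)..(T + h), g s (h • δ b) :=
        intervalIntegral.integral_add_adjacent_intervals (hgint _ _ _) (hgint _ _ _)
      have c2 : (∫ s in (-T)..T, g s (h • δ b)) + (∫ s in T..(T + h), g s (h • δ b))
          = ∫ s in (-T)..(T + h), g s (h • δ b) :=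
        intervalIntegral.integral_add_adjacent_intervals (hgint _ _ _) (hgint _ _ _)
      have c3 : (∫ s in (-T + h)..(-T), g s (h • δ b)) =
          - ∫ s in (-T)..(-T + h), g s (h • δ b) :=
        intervalIntegral.integral_symm _ _
      rw [← c1, ← c2, c3]; abel
    -- bound each piece
    have p1 : (fun h : ℝ => (2 * T)⁻¹ • (∫ s in (-T + h)..(T + h), g s (α h b - b - h • δ b)))
        =o[nhds 0] (fun h : ℝ => h) := by
      apply Asymptotics.IsBigO.trans_isLittleO _ hrlo
      apply Asymptotics.IsBigO.of_bound ((2 * T)⁻¹ * (2 * T))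
      filter_upwards with h
      rw [norm_smul, norm_inv, Real.norm_eq_abs, abs_of_pos h2T, mul_assoc]
      apply mul_le_mul_of_nonneg_left _ (by positivity)
      have := intervalIntegral.norm_integral_le_of_norm_le_const
        (a := -T + h) (b := T + h) (C := ‖α h b - b - h • δ b‖)
        (f := fun s => g s (α h b - b - h • δ b)) (fun s _ => hgnorm s _)
      calc ‖∫ s in (-T + h)..(T + h), g s (α h b - b - h • δ b)‖
          ≤ ‖α h b - b - h • δ b‖ * |T + h - (-T + h)| := this
        _ = 2 * T * ‖α h b - b - h • δ b‖ := by
            rw [show T + h - (-T + h) = 2*T by ring, abs_of_pos h2T]; ring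
    have hsq : (fun h : ℝ => |h| * |h|) =o[nhds 0] (fun h : ℝ => h) := by
      rw [Asymptotics.isLittleO_iff]
      intro c hc
      filter_upwards [Metric.ball_mem_nhds (0:ℝ) hc] with h hh
      rw [Metric.mem_ball, Real.dist_eq, sub_zero] at hh
      rw [Real.norm_eq_abs, Real.norm_eq_abs,
        abs_of_nonneg (mul_nonneg (abs_nonneg h) (abs_nonneg h))]
      exact mul_le_mul_of_nonneg_right hh.le (abs_nonneg _)
    have p2 : ∀ u : ℝ, (fun h : ℝ => (2 * T)⁻¹ • (∫ s in u..(u + h), g s (h • δ b)))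
        =o[nhds 0] (fun h : ℝ => h) := by
      intro u
      apply Asymptotics.IsBigO.trans_isLittleO _ hsq
      apply Asymptotics.IsBigO.of_bound ((2 * T)⁻¹ * ‖δ b‖)
      filter_upwards with h
      rw [norm_smul, norm_inv, Real.norm_eq_abs, abs_of_pos h2T, mul_assoc]
      apply mul_le_mul_of_nonneg_left _ (by positivity)
      have hb' := intervalIntegral.norm_integral_le_of_norm_le_const
        (a := u) (b := u + h) (C := ‖h • δ b‖)
        (f := fun s => g s (h • δ b)) (fun s _ => hgnorm s _)
      calc ‖∫ s in u..(u + h), g s (h • δ b)‖ ≤ ‖h • δ b‖ * |u + h - u| := hb'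
        _ = ‖δ b‖ * (|h| * |h|) := by
            rw [norm_smul, Real.norm_eq_abs, show u + h - u = h by ring]; ring
        _ = ‖δ b‖ * ‖|h| * |h|‖ := by
            rw [Real.norm_eq_abs, abs_of_nonneg (mul_nonneg (abs_nonneg h) (abs_nonneg h))]
    calc (fun h : ℝ => E h - h • W)
        = fun h : ℝ => (2 * T)⁻¹ • (∫ s in (-T + h)..(T + h), g s (α h b - b - h • δ b))
          + (2 * T)⁻¹ • (∫ s in T..(T + h), g s (h • δ b))
          - (2 * T)⁻¹ • (∫ s in (-T)..(-T + h), g s (h • δ b)) := funext hident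
      _ =o[nhds 0] (fun h : ℝ => h) := (p1.add (p2 T)).sub (p2 (-T))
  have hEderiv : HasDerivAt E W 0 := by
    rw [hasDerivAt_iff_isLittleO]
    simpa [hE0] using hElo
  -- combine
  have htotal : HasDerivAt (fun h : ℝ => α h b₁)
      ((2 * T)⁻¹ • (g T b - g (-T) b) + W) 0 := by
    have hfe : (fun h : ℝ => α h b₁) = fun h => D h + E h := by
      funext h; simp [hEdef]
    rw [hfe]
    exact hDeriv.add hEderiv
  have hb₁D : b₁ ∈ Dδ := (hgen b₁).mpr ⟨_, htotal⟩
  have hδb₁ : δ b₁ = (2 * T)⁻¹ • (g T b - g (-T) b) + W :=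
    (hδ b₁ hb₁D).unique htotal
  refine ⟨hsa, hnb₁, hb₁D, hδb₁, ?_⟩
  rw [hδb₁]
  have n1 : ‖(2 * T)⁻¹ • (g T b - g (-T) b)‖ ≤ ‖b‖ / T := by
    rw [norm_smul, norm_inv, Real.norm_eq_abs, abs_of_pos h2T]
    have hgg : ‖g T b - g (-T) b‖ ≤ ‖b‖ + ‖b‖ :=
      (norm_sub_le _ _).trans (add_le_add (hgnorm T b) (hgnorm (-T) b))
    calc (2*T)⁻¹ * ‖g T b - g (-T) b‖ ≤ (2*T)⁻¹ * (‖b‖ + ‖b‖) :=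
        mul_le_mul_of_nonneg_left hgg (by positivity)
      _ = ‖b‖ / T := by field_simp; ring
  have n2 : ‖W‖ ≤ ‖δ b‖ := by
    rw [hWdef, norm_smul, norm_inv, Real.norm_eq_abs, abs_of_pos h2T]
    calc (2*T)⁻¹ * ‖∫ s in (-T)..T, g s (δ b)‖ ≤ (2*T)⁻¹ * (‖δ b‖ * (2*T)) :=
        mul_le_mul_of_nonneg_left (hnormint (δ b)) (by positivity)
      _ = ‖δ b‖ := by field_simp
  exact (norm_add_le _ _).trans (add_le_add n1 n2)
end

section
/- Let A be a C*-algebra, J a closed two-sided ideal of A invariant under a flow α, and Q : A → A/J the quotient map with induced flow α̇ on A/J with generator δ̇. Let δ be the generator of α on A. Then Q maps D(δ) onto D(δ̇); indeed (1 + δ)^{−1} ∘ Q = Q ∘ (1 + δ)^{−1} (where (1+δ)^{−1} denotes the resolvent of the generator), and consequently every h = h* ∈ D(δ̇) admits a self-adjoint lift b ∈ D(δ) with Q(b) = h. -/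
/-!
The Laplace transform `R x = ∫₀^∞ e^{-s} α_s x ds` inverts `1 - δ`: it maps into `D(δ)` with
`δ (R x) = R x - x`, and `R (h - δ h) = h` for `h ∈ D(δ)`. Since `Q` is continuous and intertwines
the flows, it commutes with the integral, so `Q ∘ R_α = R_α̇ ∘ Q`. Given `h ∈ D(δ̇)`, pick any
preimage `a` of `h - δ̇ h`; then `R_α a ∈ D(δ)` lifts `R_α̇ (h - δ̇ h) = h`. The real part of a lift
is again in `D(δ)` because the flow commutes with `star`, and it still lifts a self-adjoint `h`.
-/

open MeasureTheory Set Filter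

section Flow

variable {E F : Type*} [NormedAddCommGroup E] [NormedSpace ℝ E]
  [NormedAddCommGroup F] [NormedSpace ℝ F] {T : ℝ → E →L[ℝ] E}

/-- With the generator `δ x = d/dt T t x |_{t=0}` this is `(1 - δ)⁻¹`. -/
noncomputable def flowResolvent (T : ℝ → E →L[ℝ] E) (x : E) : E :=
  ∫ s in Ioi (0 : ℝ), Real.exp (-s) • T s x

theorem norm_exp_neg_smul_flow_le (hnorm : ∀ t x, ‖T t x‖ ≤ ‖x‖) (s : ℝ) (x : E) :
    ‖Real.exp (-s) • T s x‖ ≤ Real.exp (-s) * ‖x‖ := by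
  rw [norm_smul, Real.norm_of_nonneg (Real.exp_pos _).le]
  exact mul_le_mul_of_nonneg_left (hnorm s x) (Real.exp_pos _).le

theorem integrableOn_exp_neg_smul_flow (hcont : ∀ x, Continuous fun t => T t x)
    (hnorm : ∀ t x, ‖T t x‖ ≤ ‖x‖) (x : E) (a : ℝ) :
    IntegrableOn (fun s => Real.exp (-s) • T s x) (Ioi a) := by
  have hmajor : IntegrableOn (fun s => Real.exp (-s) * ‖x‖) (Ioi a) := by
    simpa [IntegrableOn] using (exp_neg_integrableOn_Ioi a one_pos).mul_const ‖x‖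
  exact hmajor.mono'
    ((Real.continuous_exp.comp continuous_neg).smul (hcont x)).aestronglyMeasurable
    (Eventually.of_forall fun s => norm_exp_neg_smul_flow_le hnorm s x)

theorem map_flowResolvent [CompleteSpace E] [CompleteSpace F] {S : ℝ → F →L[ℝ] F}
    (L : E →L[ℝ] F) (hL : ∀ t x, L (T t x) = S t (L x)) {x : E}
    (hx : IntegrableOn (fun s => Real.exp (-s) • T s x) (Ioi 0)) :
    L (flowResolvent T x) = flowResolvent S (L x) := by
  simp only [flowResolvent, ← L.integral_comp_comm hx, map_smul, hL]

theorem HasDerivAt.map_flow {S : ℝ → F →L[ℝ] F} (L : E →L[ℝ] F)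
    (hL : ∀ t x, L (T t x) = S t (L x)) {x y : E} {t₀ : ℝ}
    (h : HasDerivAt (fun t => T t x) y t₀) : HasDerivAt (fun t => S t (L x)) (L y) t₀ := by
  simpa only [Function.comp_def, hL] using L.hasFDerivAt.comp_hasDerivAt t₀ h

theorem hasDerivAt_flow_of_hasDerivAt_zero (hgroup : ∀ s t x, T (s + t) x = T s (T t x))
    {x y : E} (h : HasDerivAt (fun t => T t x) y 0) (s : ℝ) :
    HasDerivAt (fun t => T t x) (T s y) s := by
  have hshift : HasDerivAt (fun t => T (t - s) x) y s :=
    HasDerivAt.comp_sub_const s s (by rwa [sub_self])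
  convert (T s).hasFDerivAt.comp_hasDerivAt s hshift using 1
  funext t
  simp only [Function.comp_apply, ← hgroup, add_sub_cancel]

theorem hasDerivAt_integral_Ioi [CompleteSpace E] {f : ℝ → E} (hf : Continuous f)
    (hint : ∀ a, IntegrableOn f (Ioi a)) (t : ℝ) :
    HasDerivAt (fun t => ∫ u in Ioi t, f u) (-f t) t := by
  have hsplit : (fun t => ∫ u in Ioi t, f u) = fun t => (∫ u in Ioi 0, f u) - ∫ u in 0..t, f u := by
    funext t
    rw [← intervalIntegral.integral_Ioi_sub_Ioi' (hint 0) (hint t), sub_sub_cancel]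
  rw [hsplit, ← zero_sub]
  exact (hasDerivAt_const t _).sub (hf.integral_hasStrictDerivAt 0 t).hasDerivAt

theorem flow_apply_flowResolvent [CompleteSpace E]
    (hgroup : ∀ s t x, T (s + t) x = T s (T t x)) {x : E}
    (hx : IntegrableOn (fun s => Real.exp (-s) • T s x) (Ioi 0)) (t : ℝ) :
    T t (flowResolvent T x) = Real.exp t • ∫ u in Ioi t, Real.exp (-u) • T u x := by
  have hshift := (measurePreserving_add_right volume t).setIntegral_preimage_emb
    (measurableEmbedding_addRight t) (fun u => Real.exp (-u) • T u x) (Ioi t)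
  rw [preimage_add_const_Ioi, sub_self] at hshift
  rw [flowResolvent, ← (T t).integral_comp_comm hx, ← hshift, ← integral_smul]
  congr 1 with s
  rw [map_smul, ← hgroup, smul_smul, ← Real.exp_add, add_comm t s]
  ring_nf

theorem hasDerivAt_flow_flowResolvent [CompleteSpace E]
    (hgroup : ∀ s t x, T (s + t) x = T s (T t x)) (hzero : ∀ x, T 0 x = x)
    (hcont : ∀ x, Continuous fun t => T t x) (hnorm : ∀ t x, ‖T t x‖ ≤ ‖x‖) (x : E) :
    HasDerivAt (fun t => T t (flowResolvent T x)) (flowResolvent T x - x) 0 := by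
  have hint := integrableOn_exp_neg_smul_flow hcont hnorm x
  have hf : Continuous fun s => Real.exp (-s) • T s x :=
    (Real.continuous_exp.comp continuous_neg).smul (hcont x)
  rw [funext (flow_apply_flowResolvent hgroup (hint 0))]
  refine ((Real.hasDerivAt_exp 0).smul (hasDerivAt_integral_Ioi hf hint 0)).congr_deriv ?_
  simp only [neg_zero, Real.exp_zero, one_smul, hzero, flowResolvent]
  abel

theorem flowResolvent_sub_of_hasDerivAt [CompleteSpace E]
    (hgroup : ∀ s t x, T (s + t) x = T s (T t x)) (hzero : ∀ x, T 0 x = x)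
    (hcont : ∀ x, Continuous fun t => T t x) (hnorm : ∀ t x, ‖T t x‖ ≤ ‖x‖) {x y : E}
    (h : HasDerivAt (fun t => T t x) y 0) :
    flowResolvent T (x - y) = x := by
  have hderiv : ∀ s ∈ Ici (0 : ℝ), HasDerivAt (fun u => Real.exp (-u) • T u x)
      (-(Real.exp (-s) • T s (x - y))) s := by
    intro s _
    refine ((hasDerivAt_neg s).exp.smul
      (hasDerivAt_flow_of_hasDerivAt_zero hgroup h s)).congr_deriv ?_
    simp only [map_sub, smul_sub, mul_neg_one, neg_smul, neg_sub]
    abel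
  have hdecay : Tendsto (fun u => Real.exp (-u) • T u x) atTop (nhds 0) := by
    refine squeeze_zero_norm (fun u => norm_exp_neg_smul_flow_le hnorm u x) ?_
    simpa using Real.tendsto_exp_neg_atTop_nhds_zero.mul_const ‖x‖
  have hftc := integral_Ioi_of_hasDerivAt_of_tendsto' hderiv
    (integrableOn_exp_neg_smul_flow hcont hnorm (x - y) 0).neg hdecay
  rwa [integral_neg, neg_zero, Real.exp_zero, one_smul, hzero, zero_sub, neg_inj] at hftc

end Flow

section CStarAlgebra

open scoped CStarAlgebra ComplexStarModule

variable {A B : Type*} [CStarAlgebra A] [CStarAlgebra B]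

/-- Continuity is automatic for `*`-homomorphisms of C⋆-algebras. -/
noncomputable def StarAlgHom.toRealCLM {G : Type*} [FunLike G A B]
    [NonUnitalAlgHomClass G ℂ A B] [StarHomClass G A B]
    (φ : G) : A →L[ℝ] B where
  toFun := φ
  map_add' := map_add φ
  map_smul' := (φ : A →ₗ[ℂ] B).map_smul_of_tower
  cont := map_continuous φ

theorem apply_zero_of_apply_add {G X : Type*} [EquivLike G X X] {α : ℝ → G}
    (hgroup : ∀ s t x, α (s + t) x = α s (α t x)) (x : X) : α 0 x = x :=
  EquivLike.injective (α 0) (by rw [← hgroup, add_zero])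

theorem HasDerivAt.flow_realPart {G : Type*} [FunLike G A A] [StarHomClass G A A]
    [LinearMapClass G ℂ A A] {α : ℝ → G} {x y : A} {t₀ : ℝ}
    (h : HasDerivAt (fun t => α t x) y t₀) :
    HasDerivAt (fun t => α t (ℜ x : A)) (ℜ y : A) t₀ := by
  have hreal : (fun t => α t (ℜ x : A)) = fun t => (2⁻¹ : ℝ) • (α t x + star (α t x)) := by
    funext t
    rw [map_realPart, realPart_apply_coe]
  rw [hreal, realPart_apply_coe]
  exact (h.add h.star).const_smul (2⁻¹ : ℝ)

end CStarAlgebra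

theorem quotient_generator_lifting_general
    {A B : Type*} [CStarAlgebra A] [CStarAlgebra B]
    (Q : A →⋆ₐ[ℂ] B) (hQ : Function.Surjective Q)
    (α : ℝ → A ≃⋆ₐ[ℂ] A) (αq : ℝ → B ≃⋆ₐ[ℂ] B)
    (hgroupA : ∀ s t : ℝ, ∀ x : A, α (s + t) x = α s (α t x))
    (hgroupB : ∀ s t : ℝ, ∀ y : B, αq (s + t) y = αq s (αq t y))
    (hcontA : ∀ x : A, Continuous fun t : ℝ => α t x)
    (hcontB : ∀ y : B, Continuous fun t : ℝ => αq t y)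
    (hint : ∀ (t : ℝ) (x : A), Q (α t x) = αq t (Q x))
    (DδA : Set A)
    (hgenA : ∀ x : A, x ∈ DδA ↔ ∃ y : A, HasDerivAt (fun t : ℝ => α t x) y 0)
    (DδB : Set B)
    (hgenB : ∀ y : B, y ∈ DδB ↔ ∃ z : B, HasDerivAt (fun t : ℝ => αq t y) z 0) :
    (∀ x : A, Q (∫ s in Set.Ioi (0:ℝ), Real.exp (-s) • α s x) =
        ∫ s in Set.Ioi (0:ℝ), Real.exp (-s) • αq s (Q x)) ∧
    Q '' DδA = DδB ∧
    ∀ h ∈ DδB, IsSelfAdjoint h →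
      ∃ b ∈ DδA, IsSelfAdjoint b ∧ Q b = h := by
  let T : ℝ → A →L[ℝ] A := fun t => StarAlgHom.toRealCLM (α t)
  let S : ℝ → B →L[ℝ] B := fun t => StarAlgHom.toRealCLM (αq t)
  have hnormA : ∀ t x, ‖T t x‖ ≤ ‖x‖ := fun t => NonUnitalStarAlgHom.norm_apply_le (α t)
  have hres : ∀ x, Q (flowResolvent T x) = flowResolvent S (Q x) := fun x =>
    map_flowResolvent (StarAlgHom.toRealCLM Q) hint
      (integrableOn_exp_neg_smul_flow hcontA hnormA x 0)
  have hlift : ∀ h ∈ DδB, ∃ b ∈ DδA, Q b = h := by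
    intro h hh
    obtain ⟨z, hz⟩ := (hgenB h).1 hh
    obtain ⟨a, ha⟩ := hQ (h - z)
    refine ⟨flowResolvent T a, (hgenA _).2 ⟨_, hasDerivAt_flow_flowResolvent hgroupA
      (apply_zero_of_apply_add hgroupA) hcontA hnormA a⟩, ?_⟩
    rw [hres, ha]
    exact flowResolvent_sub_of_hasDerivAt hgroupB (apply_zero_of_apply_add hgroupB) hcontB
      (fun t => NonUnitalStarAlgHom.norm_apply_le (αq t)) hz
  refine ⟨hres, Subset.antisymm ?_ hlift, ?_⟩
  · rintro _ ⟨x, hx, rfl⟩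
    obtain ⟨y, hy⟩ := (hgenA x).1 hx
    exact (hgenB _).2 ⟨Q y, hy.map_flow (T := T) (S := S) (StarAlgHom.toRealCLM Q) hint⟩
  · intro h hh hsa
    obtain ⟨b, hb, rfl⟩ := hlift h hh
    obtain ⟨y, hy⟩ := (hgenA b).1 hb
    exact ⟨realPart b, (hgenA _).2 ⟨_, hy.flow_realPart⟩, (realPart b).prop,
      by rw [map_realPart, hsa.coe_realPart]⟩

/-- Let `J` be a closed α-invariant ideal of a C*-algebra `A`, realized as
the kernel of a surjective *-homomorphism `Q : A → B` intertwining the flow `α` on `A`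
with the induced flow `α̇` on the quotient `B`, with generators `δ` and `δ̇`. Then the
resolvent `(1+δ)⁻¹` (given by the Laplace transform `x ↦ ∫₀^∞ e^{−s} α_s(x) ds`) commutes
with `Q`, `Q(D(δ)) = D(δ̇)`, and every self-adjoint `h ∈ D(δ̇)` lifts to a self-adjoint
`b ∈ D(δ)` with `Q(b) = h`. -/
theorem quotient_generator_lifting
    {A B : Type*} [CStarAlgebra A] [CStarAlgebra B]
    (Q : A →⋆ₐ[ℂ] B) (hQ : Function.Surjective Q)
    (J : Set A) (hJ : J = {x : A | Q x = 0})
    (α : ℝ → A ≃⋆ₐ[ℂ] A) (αq : ℝ → B ≃⋆ₐ[ℂ] B)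
    (hgroupA : ∀ s t : ℝ, ∀ x : A, α (s + t) x = α s (α t x))
    (hgroupB : ∀ s t : ℝ, ∀ y : B, αq (s + t) y = αq s (αq t y))
    (hcontA : ∀ x : A, Continuous fun t : ℝ => α t x)
    (hcontB : ∀ y : B, Continuous fun t : ℝ => αq t y)
    (hJinv : ∀ t : ℝ, ∀ x ∈ J, α t x ∈ J)
    (hint : ∀ (t : ℝ) (x : A), Q (α t x) = αq t (Q x))
    (DδA : Set A) (δA : A → A)
    (hgenA : ∀ x : A, x ∈ DδA ↔ ∃ y : A, HasDerivAt (fun t : ℝ => α t x) y 0)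
    (hδA : ∀ x ∈ DδA, HasDerivAt (fun t : ℝ => α t x) (δA x) 0)
    (DδB : Set B) (δB : B → B)
    (hgenB : ∀ y : B, y ∈ DδB ↔ ∃ z : B, HasDerivAt (fun t : ℝ => αq t y) z 0)
    (hδB : ∀ y ∈ DδB, HasDerivAt (fun t : ℝ => αq t y) (δB y) 0) :
    (∀ x : A, Q (∫ s in Set.Ioi (0:ℝ), Real.exp (-s) • α s x) =
        ∫ s in Set.Ioi (0:ℝ), Real.exp (-s) • αq s (Q x)) ∧
    Q '' DδA = DδB ∧
    ∀ h ∈ DδB, IsSelfAdjoint h →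
      ∃ b ∈ DδA, IsSelfAdjoint b ∧ Q b = h :=
  quotient_generator_lifting_general Q hQ α αq hgroupA hgroupB hcontA hcontB hint DδA hgenA DδB
    hgenB
end
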